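/- arXiv:math/0612352 — 3 statements merged into one kernel-verified Lean document; each statement's English description precedes it below -/
import Mathlib

section
/- Let H₁ and H₂ be Hilbert spaces and S : H₁ → H₂ a bounded linear operator. Then S is compact if and only if for every ε > 0 there exists a compact operator T_ε : H₁ → H₂ such that ‖S v‖² ≤ ‖T_ε v‖² + ε·‖v‖² for all v ∈ H₁. -/
open Set Metric

theorem stmt2 {H₁ H₂ : Type*}
    [NormedAddCommGroup H₁] [InnerProductSpace ℂ H₁] [CompleteSpace H₁]
    [NormedAddCommGroup H₂] [InnerProductSpace ℂ H₂] [CompleteSpace H₂]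
    (S : H₁ →L[ℂ] H₂) :
    IsCompactOperator S ↔
      ∀ ε : ℝ, 0 < ε → ∃ T : H₁ →L[ℂ] H₂, IsCompactOperator T ∧
        ∀ v : H₁, ‖S v‖ ^ 2 ≤ ‖T v‖ ^ 2 + ε * ‖v‖ ^ 2 := by
  constructor
  · intro hS ε hε
    refine ⟨S, hS, fun v => ?_⟩
    nlinarith [sq_nonneg ‖v‖, hε.le]
  · intro h
    rw [isCompactOperator_iff_exists_mem_nhds_isCompact_closure_image]
    refine ⟨closedBall 0 1, closedBall_mem_nhds _ one_pos, ?_⟩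
    refine TotallyBounded.isCompact_of_isClosed
      ((totallyBounded_closure).mpr ?_) isClosed_closure
    rw [Metric.totallyBounded_iff]
    intro ε hε
    obtain ⟨T, hTc, hT⟩ := h (ε ^ 2 / 8) (by positivity)
    have hTB : TotallyBounded (⇑T '' closedBall (0 : H₁) 1) :=
      ((hTc.isCompact_closure_image_closedBall (𝕜₁ := ℂ)
        (f := (T : H₁ →ₗ[ℂ] H₂)) 1).totallyBounded).subset subset_closure
    obtain ⟨t, hts, htf, htc⟩ :=
      finite_approx_of_totallyBounded hTB (ε / 2) (by positivity)
    -- choose preimages in the closed ball for each center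
    choose! g hg1 hg2 using fun y (hy : y ∈ t) => (hts hy : y ∈ ⇑T '' closedBall 0 1)
    refine ⟨(fun y => S (g y)) '' t, htf.image _, ?_⟩
    rintro _ ⟨v, hv, rfl⟩
    have hTv : T v ∈ ⋃ y ∈ t, ball y (ε / 2) := htc ⟨v, hv, rfl⟩
    simp only [mem_iUnion, mem_ball, exists_prop] at hTv
    obtain ⟨y, hy, hdy⟩ := hTv
    simp only [mem_iUnion, mem_ball, exists_prop, mem_image]
    refine ⟨S (g y), ⟨y, hy, rfl⟩, ?_⟩
    have hw : g y ∈ closedBall (0 : H₁) 1 := hg1 y hy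
    have hTw : T (g y) = y := hg2 y hy
    have key : ‖S (v - g y)‖ ^ 2 ≤ ‖T (v - g y)‖ ^ 2 + ε ^ 2 / 8 * ‖v - g y‖ ^ 2 := hT _
    have h1 : ‖T (v - g y)‖ < ε / 2 := by
      rw [map_sub, hTw, ← dist_eq_norm]; exact hdy
    have h2 : ‖v - g y‖ ≤ 2 := by
      calc ‖v - g y‖ ≤ ‖v‖ + ‖g y‖ := norm_sub_le _ _
        _ ≤ 1 + 1 := by
            have := mem_closedBall_zero_iff.mp hv
            have := mem_closedBall_zero_iff.mp hw
            linarith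
        _ = 2 := by norm_num
    rw [dist_eq_norm, ← map_sub]
    have hSnn : (0 : ℝ) ≤ ‖S (v - g y)‖ := norm_nonneg _
    have hTnn : (0 : ℝ) ≤ ‖T (v - g y)‖ := norm_nonneg _
    have hnn : (0 : ℝ) ≤ ‖v - g y‖ := norm_nonneg _
    refine lt_of_pow_lt_pow_left₀ 2 hε.le ?_
    have h1sq : ‖T (v - g y)‖ ^ 2 < ε ^ 2 / 4 := by nlinarith
    have h2sq : ‖v - g y‖ ^ 2 ≤ 4 := by nlinarith
    nlinarith [sq_nonneg ε]
end

section
/- Let H₁, H₂ be Hilbert spaces, S : H₁ → H₂ a bounded linear operator, and (e_i)_{i ∈ ℕ} an orthonormal basis of H₁ such that the images (S e_i) are mutually orthogonal. Then S is a compact operator if and only if ‖S e_i‖ → 0 as i → ∞. -/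
/-!
Pairwise orthogonal vectors satisfy `‖x‖ ≤ ‖x - y‖`, so a convergent subsequence of `S eᵢ`
forces its norms to zero; as `S` maps the basis into a compact set, every subsequence has such a
further subsequence. Conversely, by Pythagoras and Bessel, an operator sending an orthonormal basis
to orthogonal vectors of norm at most `ε` has norm at most `ε`; applied to `S` minus its finite
truncations `∑_{i ∈ s} ⟪eᵢ, ·⟫ S eᵢ`, this shows these finite-rank operators converge to `S`.
-/

open Filter Topology
open scoped InnerProductSpace

section Orthogonal

variable {𝕜 E : Type*} [RCLike 𝕜] [NormedAddCommGroup E] [InnerProductSpace 𝕜 E]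

lemma norm_le_norm_sub_of_inner_eq_zero {x y : E} (h : ⟪x, y⟫_𝕜 = 0) : ‖x‖ ≤ ‖x - y‖ := by
  have hsq : ‖x - y‖ ^ 2 = ‖x‖ ^ 2 + ‖y‖ ^ 2 := by
    rw [@norm_sub_sq 𝕜, h, map_zero]; ring
  exact (pow_le_pow_iff_left₀ (norm_nonneg _) (norm_nonneg _) two_ne_zero).1
    (hsq ▸ le_add_of_nonneg_right (sq_nonneg _))

lemma norm_sum_sq_of_pairwise_inner_eq_zero {ι : Type*} {w : ι → E}
    (hw : Pairwise fun i j => ⟪w i, w j⟫_𝕜 = 0) (s : Finset ι) :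
    ‖∑ i ∈ s, w i‖ ^ 2 = ∑ i ∈ s, ‖w i‖ ^ 2 := by
  classical
  induction s using Finset.induction_on with
  | empty => simp
  | insert a s ha ih =>
    have horth : ⟪w a, ∑ i ∈ s, w i⟫_𝕜 = 0 := by
      rw [inner_sum]
      exact Finset.sum_eq_zero fun i hi => hw (ne_of_mem_of_not_mem hi ha).symm
    rw [Finset.sum_insert ha, Finset.sum_insert ha, ← ih, sq, sq, sq,
      norm_add_sq_eq_norm_sq_add_norm_sq_of_inner_eq_zero _ _ horth]

lemma tendsto_norm_zero_of_tendsto_of_pairwise_inner_eq_zero {u : ℕ → E} {a : E}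
    (hu : Pairwise fun i j => ⟪u i, u j⟫_𝕜 = 0) (ha : Tendsto u atTop (𝓝 a)) :
    Tendsto (fun n => ‖u n‖) atTop (𝓝 0) := by
  have hdiff : Tendsto (fun n => ‖u n - u (n + 1)‖) atTop (𝓝 0) := by
    simpa using (ha.sub (ha.comp (tendsto_add_atTop_nat 1))).norm
  exact squeeze_zero (fun n => norm_nonneg _)
    (fun n => norm_le_norm_sub_of_inner_eq_zero (hu (Nat.lt_succ_self n).ne)) hdiff

lemma tendsto_norm_zero_of_isCompact_of_pairwise_inner_eq_zero {v : ℕ → E} {K : Set E}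
    (hK : IsCompact K) (hvK : ∀ n, v n ∈ K) (hv : Pairwise fun i j => ⟪v i, v j⟫_𝕜 = 0) :
    Tendsto (fun n => ‖v n‖) atTop (𝓝 0) := by
  refine tendsto_of_subseq_tendsto fun ns hns => ?_
  obtain ⟨φ, -, hφ⟩ := strictMono_subseq_of_tendsto_atTop hns
  obtain ⟨a, -, ψ, hψ, ha⟩ := hK.tendsto_subseq fun n => hvK (ns (φ n))
  exact ⟨φ ∘ ψ, tendsto_norm_zero_of_tendsto_of_pairwise_inner_eq_zero
    (hv.comp_of_injective (hφ.comp hψ).injective) ha⟩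

end Orthogonal

section Operator

variable {𝕜 E F : Type*} [RCLike 𝕜] [NormedAddCommGroup E] [InnerProductSpace 𝕜 E]
  [NormedAddCommGroup F] [InnerProductSpace 𝕜 F]

lemma IsCompactOperator.tendsto_norm_apply_of_pairwise_inner_eq_zero {S : E →L[𝕜] F}
    (hS : IsCompactOperator S) {v : ℕ → E} {C : ℝ} (hv : ∀ n, ‖v n‖ ≤ C)
    (horth : Pairwise fun i j => ⟪S (v i), S (v j)⟫_𝕜 = 0) :
    Tendsto (fun n => ‖S (v n)‖) atTop (𝓝 0) :=
  tendsto_norm_zero_of_isCompact_of_pairwise_inner_eq_zero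
    (hS.isCompact_closure_image_closedBall C)
    (fun n => subset_closure ⟨v n, mem_closedBall_zero_iff.2 (hv n), rfl⟩) horth

namespace HilbertBasis

variable {ι : Type*} (e : HilbertBasis ι 𝕜 E)

lemma norm_sum_repr_smul_le {w : ι → F} (hw : Pairwise fun i j => ⟪w i, w j⟫_𝕜 = 0)
    {ε : ℝ} (hε : 0 ≤ ε) (hwε : ∀ i, ‖w i‖ ≤ ε) (x : E) (s : Finset ι) :
    ‖∑ i ∈ s, e.repr x i • w i‖ ≤ ε * ‖x‖ := by
  have hsmul : Pairwise fun i j => ⟪e.repr x i • w i, e.repr x j • w j⟫_𝕜 = 0 :=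
    fun i j hij => by dsimp only; rw [inner_smul_left, inner_smul_right, hw hij, mul_zero, mul_zero]
  have hsq : ‖∑ i ∈ s, e.repr x i • w i‖ ^ 2 ≤ (ε * ‖x‖) ^ 2 :=
    calc ‖∑ i ∈ s, e.repr x i • w i‖ ^ 2
        = ∑ i ∈ s, ‖e.repr x i‖ ^ 2 * ‖w i‖ ^ 2 := by
          simp only [norm_sum_sq_of_pairwise_inner_eq_zero hsmul, norm_smul, mul_pow]
      _ ≤ ∑ i ∈ s, ‖e.repr x i‖ ^ 2 * ε ^ 2 := by
          gcongr with i
          exact hwε i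
      _ ≤ (ε * ‖x‖) ^ 2 := by
          rw [← Finset.sum_mul, mul_pow, mul_comm]
          gcongr
          simpa only [e.repr_apply_apply] using e.orthonormal.sum_inner_products_le x
  exact (pow_le_pow_iff_left₀ (norm_nonneg _) (by positivity) two_ne_zero).1 hsq

lemma opNorm_le_of_pairwise_inner_eq_zero {T : E →L[𝕜] F}
    (hT : Pairwise fun i j => ⟪T (e i), T (e j)⟫_𝕜 = 0) {ε : ℝ} (hε : 0 ≤ ε)
    (hTε : ∀ i, ‖T (e i)‖ ≤ ε) : ‖T‖ ≤ ε := by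
  refine T.opNorm_le_bound hε fun x => ?_
  have hsum : HasSum (fun i => e.repr x i • T (e i)) (T x) := by
    simpa only [map_smul] using (e.hasSum_repr x).mapL T
  exact le_of_tendsto hsum.norm (Eventually.of_forall (e.norm_sum_repr_smul_le hT hε hTε x))

noncomputable def truncate (S : E →L[𝕜] F) (s : Finset ι) : E →L[𝕜] F :=
  ∑ i ∈ s, (innerSL 𝕜 (e i)).smulRight (S (e i))

lemma sub_truncate_apply_self [DecidableEq ι] (S : E →L[𝕜] F) (s : Finset ι) (j : ι) :
    (S - e.truncate S s) (e j) = if j ∈ s then 0 else S (e j) := by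
  have hinner := orthonormal_iff_ite.1 e.orthonormal
  simp only [truncate, sub_apply, sum_apply,
    ContinuousLinearMap.smulRight_apply, coe_innerSL_apply, hinner, ite_smul, one_smul, zero_smul,
    Finset.sum_ite_eq']
  split_ifs <;> simp

lemma isCompactOperator_truncate (S : E →L[𝕜] F) (s : Finset ι) :
    IsCompactOperator (e.truncate S s) := by
  have hrankOne : ∀ i, IsCompactOperator ((innerSL 𝕜 (e i)).smulRight (S (e i))) := fun i =>
    (isCompactOperator_of_locallyCompactSpace_dom (innerSL 𝕜 (e i))).clm_comp
      (ContinuousLinearMap.toSpanSingleton 𝕜 (S (e i)))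
  exact Submodule.sum_mem (compactOperator (RingHom.id 𝕜) E F) fun i _ => hrankOne i

lemma tendsto_truncate {S : E →L[𝕜] F} (horth : Pairwise fun i j => ⟪S (e i), S (e j)⟫_𝕜 = 0)
    (hS : Tendsto (fun i => ‖S (e i)‖) cofinite (𝓝 0)) : Tendsto (e.truncate S) atTop (𝓝 S) := by
  classical
  rw [Metric.tendsto_atTop]
  intro ε hε
  have hfin : {i | ¬‖S (e i)‖ ≤ ε / 2}.Finite :=
    eventually_cofinite.1 (hS.eventually (eventually_le_nhds (half_pos hε)))
  refine ⟨hfin.toFinset, fun s hs => ?_⟩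
  rw [dist_comm, dist_eq_norm]
  refine (e.opNorm_le_of_pairwise_inner_eq_zero (fun i j hij => ?_) (half_pos hε).le
    fun i => ?_).trans_lt (half_lt_self hε)
  · simp only [sub_truncate_apply_self]
    split_ifs <;> simp [horth hij]
  · rw [sub_truncate_apply_self]
    split_ifs with hi
    · simpa using (half_pos hε).le
    · by_contra hlarge
      exact hi (hs (hfin.mem_toFinset.2 hlarge))

theorem isCompactOperator_of_tendsto_norm_apply [CompleteSpace F] {S : E →L[𝕜] F}
    (horth : Pairwise fun i j => ⟪S (e i), S (e j)⟫_𝕜 = 0)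
    (hS : Tendsto (fun i => ‖S (e i)‖) cofinite (𝓝 0)) : IsCompactOperator S :=
  isCompactOperator_of_tendsto (e.tendsto_truncate horth hS)
    (Eventually.of_forall (e.isCompactOperator_truncate S))

end HilbertBasis

end Operator

theorem stmt4_general {H₁ H₂ : Type*}
    [NormedAddCommGroup H₁] [InnerProductSpace ℂ H₁]
    [NormedAddCommGroup H₂] [InnerProductSpace ℂ H₂] [CompleteSpace H₂]
    (e : HilbertBasis ℕ ℂ H₁) (S : H₁ →L[ℂ] H₂)
    (horth : ∀ i j : ℕ, i ≠ j → (inner ℂ (S (e i)) (S (e j)) : ℂ) = 0) :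
    IsCompactOperator S ↔
      Filter.Tendsto (fun i : ℕ => ‖S (e i)‖) Filter.atTop (nhds 0) := by
  have horth' : Pairwise fun i j => ⟪S (e i), S (e j)⟫_ℂ = 0 := fun i j => horth i j
  refine ⟨fun hS => hS.tendsto_norm_apply_of_pairwise_inner_eq_zero
    (fun n => (e.orthonormal.1 n).le) horth', fun hS => ?_⟩
  exact e.isCompactOperator_of_tendsto_norm_apply horth' (Nat.cofinite_eq_atTop ▸ hS)

theorem stmt4 {H₁ H₂ : Type*}
    [NormedAddCommGroup H₁] [InnerProductSpace ℂ H₁] [CompleteSpace H₁]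
    [NormedAddCommGroup H₂] [InnerProductSpace ℂ H₂] [CompleteSpace H₂]
    (e : HilbertBasis ℕ ℂ H₁) (S : H₁ →L[ℂ] H₂)
    (horth : ∀ i j : ℕ, i ≠ j → (inner ℂ (S (e i)) (S (e j)) : ℂ) = 0) :
    IsCompactOperator S ↔
      Filter.Tendsto (fun i : ℕ => ‖S (e i)‖) Filter.atTop (nhds 0) :=
  stmt4_general e S horth
end

section
/- With μ a measure on ℂ^n whose monomials are orthogonal in L²(μ), c_α = (∫|z^α|²dμ)^{-1} (c_γ = 0 if γ has a negative entry), and S z^α d\bar{z}_k := \bar{z}_k z^α − (c_{α−e_k}/c_α) z^{α−e_k}, the L²(μ) inner product ⟨S z^α d\bar{z}_k, S z^β d\bar{z}_ℓ⟩ vanishes unless β = α + e_ℓ − e_k, in which case it equals (1/c_α)·(c_α/c_{α+e_ℓ} − c_{α−e_k}/c_{α+e_ℓ−e_k}). -/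
open MeasureTheory

/-- The monomial `z ^ α` on `ℂ^n`. -/
noncomputable def mono (n : ℕ) (α : Fin n → ℕ) (z : Fin n → ℂ) : ℂ := ∏ i, z i ^ α i

/-- The `p`-th standard unit multiindex. -/
def uvec (n : ℕ) (p : Fin n) : Fin n → ℕ := fun i => if i = p then 1 else 0

/-- The canonical solution `S z^α d z̄_k = z̄_k z^α - (c_{α-e_k}/c_α) z^{α-e_k}`,
with the convention that `c_{α-e_k} = 0` when `α_k = 0`. -/
noncomputable def Sop (n : ℕ) (c : (Fin n → ℕ) → ℝ) (α : Fin n → ℕ) (k : Fin n)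
    (z : Fin n → ℂ) : ℂ :=
  (starRingEnd ℂ) (z k) * mono n α z
    - ((if α k = 0 then (0 : ℝ) else c (α - uvec n k) / c α : ℝ) : ℂ)
        * mono n (α - uvec n k) z

/-! Write `S z^α dz̄_k = z̄_k z^α - a z^{α-e_k}`. Since
`z̄_k z^α · conj (z̄_l z^β) = z^{α+e_l} · conj (z^{β+e_k})`, the inner product splits into four
Gram entries of monomials. By orthogonality each entry vanishes unless its two multi-indices
agree, and whenever its coefficient is nonzero that coincidence is equivalent to
`β + e_k = α + e_l`; in that case the entries are the reciprocals `1 / c_γ` and the four terms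
add up to the stated value. -/

open ComplexConjugate

section L2

variable {X : Type*} [MeasurableSpace X] {μ : Measure X}

lemma integral_mul_conj_self (f : X → ℂ) :
    ∫ x, f x * conj (f x) ∂μ = ((∫ x, ‖f x‖ ^ 2 ∂μ : ℝ) : ℂ) := by
  simp_rw [Complex.mul_conj', ← Complex.ofReal_pow]
  exact integral_ofReal

lemma integral_sub_mul_conj_sub {f₁ f₂ g₁ g₂ : X → ℂ} (a b : ℂ) (hf₁ : MemLp f₁ 2 μ)
    (hf₂ : MemLp f₂ 2 μ) (hg₁ : MemLp g₁ 2 μ) (hg₂ : MemLp g₂ 2 μ) :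
    ∫ x, (f₁ x - a * f₂ x) * conj (g₁ x - b * g₂ x) ∂μ =
      ∫ x, f₁ x * conj (g₁ x) ∂μ - conj b * ∫ x, f₁ x * conj (g₂ x) ∂μ
        - a * ∫ x, f₂ x * conj (g₁ x) ∂μ + a * conj b * ∫ x, f₂ x * conj (g₂ x) ∂μ := by
  have h₁₁ : Integrable (fun x => f₁ x * conj (g₁ x)) μ := hf₁.integrable_mul hg₁.star
  have h₁₂ : Integrable (fun x => f₁ x * conj (g₂ x)) μ := hf₁.integrable_mul hg₂.star
  have h₂₁ : Integrable (fun x => f₂ x * conj (g₁ x)) μ := hf₂.integrable_mul hg₁.star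
  have h₂₂ : Integrable (fun x => f₂ x * conj (g₂ x)) μ := hf₂.integrable_mul hg₂.star
  have expand : ∀ x, (f₁ x - a * f₂ x) * conj (g₁ x - b * g₂ x) =
      f₁ x * conj (g₁ x) - conj b * (f₁ x * conj (g₂ x))
        - a * (f₂ x * conj (g₁ x)) + a * conj b * (f₂ x * conj (g₂ x)) := fun x => by
    simp only [map_sub, map_mul]; ring
  simp_rw [expand]
  rw [integral_add (by fun_prop) (by fun_prop), integral_sub (by fun_prop) (by fun_prop),
    integral_sub h₁₁ (by fun_prop), integral_const_mul, integral_const_mul, integral_const_mul]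

end L2

section Multiindex

variable {n : ℕ} {k l : Fin n} {α β γ : Fin n → ℕ}

lemma uvec_le_iff : uvec n k ≤ α ↔ α k ≠ 0 := by
  refine ⟨fun h => Nat.one_le_iff_ne_zero.1 (by simpa [uvec] using h k), fun h i => ?_⟩
  simp only [uvec]
  split_ifs with hi
  · subst hi; omega
  · exact Nat.zero_le _

lemma sub_uvec_add_eq_iff (hα : α k ≠ 0) : α - uvec n k + γ = β ↔ α + γ = β + uvec n k := by
  rw [← add_left_inj (uvec n k), add_right_comm, tsub_add_cancel_of_le (uvec_le_iff.2 hα)]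

lemma sub_uvec_eq_sub_uvec_iff (hα : α k ≠ 0) (hβ : β l ≠ 0) :
    α - uvec n k = β - uvec n l ↔ β + uvec n k = α + uvec n l := by
  rw [eq_comm, tsub_eq_iff_eq_add_of_le (uvec_le_iff.2 hβ), eq_comm, sub_uvec_add_eq_iff hα,
    eq_comm]

lemma ne_zero_iff_of_add_uvec_eq (h : β + uvec n k = α + uvec n l) : α k ≠ 0 ↔ β l ≠ 0 := by
  have hk := congrFun h k
  have hl := congrFun h l
  simp only [Pi.add_apply, uvec] at hk hl
  by_cases hkl : k = l
  · subst hkl; simp only [↓reduceIte, Nat.add_right_cancel_iff] at hk; omega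
  · simp only [↓reduceIte, hkl, add_zero, Ne.symm hkl] at hk hl; omega

end Multiindex

section Monomials

variable {n : ℕ}

lemma mono_add_uvec (α : Fin n → ℕ) (k : Fin n) (z : Fin n → ℂ) :
    mono n (α + uvec n k) z = z k * mono n α z := by
  simp only [mono, uvec, Pi.add_apply, pow_add, Finset.prod_mul_distrib, pow_ite, pow_one,
    pow_zero, Finset.prod_ite_eq', Finset.mem_univ, if_true]
  ring

noncomputable def sopCoeff (n : ℕ) (c : (Fin n → ℕ) → ℝ) (α : Fin n → ℕ) (k : Fin n) : ℝ :=
  if α k = 0 then 0 else c (α - uvec n k) / c α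

lemma Sop_eq (c : (Fin n → ℕ) → ℝ) (α : Fin n → ℕ) (k : Fin n) (z : Fin n → ℂ) :
    Sop n c α k z = conj (z k) * mono n α z - (sopCoeff n c α k : ℂ) * mono n (α - uvec n k) z :=
  rfl

variable {μ : Measure (Fin n → ℂ)}

lemma integral_Sop_mul_conj_Sop (hL2 : ∀ α : Fin n → ℕ, MemLp (mono n α) 2 μ)
    (hL2' : ∀ (k : Fin n) (α : Fin n → ℕ), MemLp (fun z => conj (z k) * mono n α z) 2 μ)
    (c : (Fin n → ℕ) → ℝ) (k l : Fin n) (α β : Fin n → ℕ) :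
    ∫ z, Sop n c α k z * conj (Sop n c β l z) ∂μ =
      ∫ z, mono n (α + uvec n l) z * conj (mono n (β + uvec n k) z) ∂μ
        - sopCoeff n c β l * ∫ z, mono n α z * conj (mono n (β - uvec n l + uvec n k) z) ∂μ
        - sopCoeff n c α k * ∫ z, mono n (α - uvec n k + uvec n l) z * conj (mono n β z) ∂μ
        + sopCoeff n c α k * sopCoeff n c β l
          * ∫ z, mono n (α - uvec n k) z * conj (mono n (β - uvec n l) z) ∂μ := by
  have e₁ : ∀ z, conj (z k) * mono n α z * conj (conj (z l) * mono n β z) =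
      mono n (α + uvec n l) z * conj (mono n (β + uvec n k) z) := fun z => by
    simp only [mono_add_uvec, map_mul, Complex.conj_conj]; ring
  have e₂ : ∀ z, conj (z k) * mono n α z * conj (mono n (β - uvec n l) z) =
      mono n α z * conj (mono n (β - uvec n l + uvec n k) z) := fun z => by
    simp only [mono_add_uvec, map_mul]; ring
  have e₃ : ∀ z, mono n (α - uvec n k) z * conj (conj (z l) * mono n β z) =
      mono n (α - uvec n k + uvec n l) z * conj (mono n β z) := fun z => by
    simp only [mono_add_uvec, map_mul, Complex.conj_conj]; ring
  simp_rw [Sop_eq]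
  rw [integral_sub_mul_conj_sub _ _ (hL2' k α) (hL2 _) (hL2' l β) (hL2 _), Complex.conj_ofReal]
  simp_rw [e₁, e₂, e₃]

lemma integral_mono_mul_conj_mono
    (horth : ∀ α β : Fin n → ℕ, α ≠ β → ∫ z, mono n α z * conj (mono n β z) ∂μ = 0)
    {c : (Fin n → ℕ) → ℝ} (hc : ∀ α, c α = (∫ z, ‖mono n α z‖ ^ 2 ∂μ)⁻¹) (α β : Fin n → ℕ) :
    ∫ z, mono n α z * conj (mono n β z) ∂μ = if α = β then ((c α)⁻¹ : ℂ) else 0 := by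
  split_ifs with h
  · rw [← h, integral_mul_conj_self, hc, Complex.ofReal_inv, inv_inv]
  · exact horth α β h

end Monomials

section InnerProduct

variable {n : ℕ} {μ : Measure (Fin n → ℂ)} {c : (Fin n → ℕ) → ℝ} {k l : Fin n}
  {α β : Fin n → ℕ}

lemma integral_Sop_mul_conj_Sop_of_ne (hL2 : ∀ α : Fin n → ℕ, MemLp (mono n α) 2 μ)
    (hL2' : ∀ (k : Fin n) (α : Fin n → ℕ), MemLp (fun z => conj (z k) * mono n α z) 2 μ)
    (horth : ∀ α β : Fin n → ℕ, α ≠ β → ∫ z, mono n α z * conj (mono n β z) ∂μ = 0)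
    (hc : ∀ α, c α = (∫ z, ‖mono n α z‖ ^ 2 ∂μ)⁻¹) (h : β + uvec n k ≠ α + uvec n l) :
    ∫ z, Sop n c α k z * conj (Sop n c β l z) ∂μ = 0 := by
  rw [integral_Sop_mul_conj_Sop hL2 hL2']
  simp only [integral_mono_mul_conj_mono horth hc]
  have hβ_term : (sopCoeff n c β l : ℂ) *
      (if α = β - uvec n l + uvec n k then ((c α)⁻¹ : ℂ) else 0) = 0 := by
    by_cases hβ : β l = 0
    · simp [sopCoeff, hβ]
    · rw [if_neg fun e => h ((sub_uvec_add_eq_iff hβ).1 e.symm), mul_zero]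
  have hα_term : (sopCoeff n c α k : ℂ) *
      (if α - uvec n k + uvec n l = β then ((c (α - uvec n k + uvec n l))⁻¹ : ℂ) else 0) = 0 := by
    by_cases hα : α k = 0
    · simp [sopCoeff, hα]
    · rw [if_neg fun e => h ((sub_uvec_add_eq_iff hα).1 e).symm, mul_zero]
  have hαβ_term : (sopCoeff n c α k : ℂ) * sopCoeff n c β l *
      (if α - uvec n k = β - uvec n l then ((c (α - uvec n k))⁻¹ : ℂ) else 0) = 0 := by
    by_cases hα : α k = 0
    · simp [sopCoeff, hα]
    by_cases hβ : β l = 0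
    · simp [sopCoeff, hβ]
    rw [if_neg fun e => h ((sub_uvec_eq_sub_uvec_iff hα hβ).1 e), mul_zero]
  rw [if_neg (Ne.symm h), hβ_term, hα_term, hαβ_term]
  ring

lemma integral_Sop_mul_conj_Sop_of_eq (hL2 : ∀ α : Fin n → ℕ, MemLp (mono n α) 2 μ)
    (hL2' : ∀ (k : Fin n) (α : Fin n → ℕ), MemLp (fun z => conj (z k) * mono n α z) 2 μ)
    (horth : ∀ α β : Fin n → ℕ, α ≠ β → ∫ z, mono n α z * conj (mono n β z) ∂μ = 0)
    (hpos : ∀ α : Fin n → ℕ, 0 < ∫ z, ‖mono n α z‖ ^ 2 ∂μ)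
    (hc : ∀ α, c α = (∫ z, ‖mono n α z‖ ^ 2 ∂μ)⁻¹) (h : β + uvec n k = α + uvec n l) :
    ∫ z, Sop n c α k z * conj (Sop n c β l z) ∂μ =
      ((1 / c α) * (c α / c (α + uvec n l)
        - (if α k = 0 then 0 else c (α - uvec n k) / c (α + uvec n l - uvec n k))) : ℝ) := by
  have hc0 : ∀ γ, (c γ : ℂ) ≠ 0 := fun γ => by
    rw [hc, Complex.ofReal_ne_zero]; exact (inv_pos.2 (hpos γ)).ne'
  rw [integral_Sop_mul_conj_Sop hL2 hL2']
  simp only [integral_mono_mul_conj_mono horth hc]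
  by_cases hα : α k = 0
  · have hβ : β l = 0 := by simpa [hα] using ne_zero_iff_of_add_uvec_eq h
    simp only [sopCoeff, hα, hβ, h, ↓reduceIte, Complex.ofReal_zero, zero_mul, mul_zero,
      sub_zero, add_zero, one_div, Complex.ofReal_mul, Complex.ofReal_inv, Complex.ofReal_div]
    field_simp [hc0]
  · have hβ : β l ≠ 0 := (ne_zero_iff_of_add_uvec_eq h).1 hα
    have hsub : β - uvec n l = α - uvec n k := ((sub_uvec_eq_sub_uvec_iff hα hβ).2 h).symm
    have hadd_sub : α + uvec n l - uvec n k = β := by rw [← h, add_tsub_cancel_right]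
    have hsub_add : α - uvec n k + uvec n l = β := (sub_uvec_add_eq_iff hα).2 h.symm
    rw [if_pos h.symm, if_pos ((sub_uvec_add_eq_iff hβ).2 h).symm, if_pos hsub_add,
      if_pos ((sub_uvec_eq_sub_uvec_iff hα hβ).2 h), if_neg hα, hadd_sub, hsub_add]
    simp only [sopCoeff, if_neg hα, if_neg hβ, hsub]
    push_cast
    field_simp [hc0]
    ring

end InnerProduct

theorem stmt9_general (n : ℕ) (μ : Measure (Fin n → ℂ))
    (hL2 : ∀ α : Fin n → ℕ, MemLp (mono n α) 2 μ)
    (hL2' : ∀ (k : Fin n) (α : Fin n → ℕ),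
      MemLp (fun z => (starRingEnd ℂ) (z k) * mono n α z) 2 μ)
    (horth : ∀ α β : Fin n → ℕ, α ≠ β →
      ∫ z, mono n α z * (starRingEnd ℂ) (mono n β z) ∂μ = 0)
    (hpos : ∀ α : Fin n → ℕ, 0 < ∫ z, ‖mono n α z‖ ^ 2 ∂μ)
    (c : (Fin n → ℕ) → ℝ) (hc : ∀ α, c α = (∫ z, ‖mono n α z‖ ^ 2 ∂μ)⁻¹)
    (k l : Fin n) (α β : Fin n → ℕ) :
    (β + uvec n k ≠ α + uvec n l →
      ∫ z, Sop n c α k z * (starRingEnd ℂ) (Sop n c β l z) ∂μ = 0) ∧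
    (β + uvec n k = α + uvec n l →
      ∫ z, Sop n c α k z * (starRingEnd ℂ) (Sop n c β l z) ∂μ =
        ((1 / c α) * (c α / c (α + uvec n l)
          - (if α k = 0 then (0 : ℝ)
             else c (α - uvec n k) / c (α + uvec n l - uvec n k))) : ℝ)) :=
  ⟨integral_Sop_mul_conj_Sop_of_ne hL2 hL2' horth hc,
    integral_Sop_mul_conj_Sop_of_eq hL2 hL2' horth hpos hc⟩

theorem stmt9 (n : ℕ) (μ : Measure (Fin n → ℂ)) [IsFiniteMeasure μ]
    (hL2 : ∀ α : Fin n → ℕ, MemLp (mono n α) 2 μ)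
    (hL2' : ∀ (k : Fin n) (α : Fin n → ℕ),
      MemLp (fun z => (starRingEnd ℂ) (z k) * mono n α z) 2 μ)
    (horth : ∀ α β : Fin n → ℕ, α ≠ β →
      ∫ z, mono n α z * (starRingEnd ℂ) (mono n β z) ∂μ = 0)
    (hpos : ∀ α : Fin n → ℕ, 0 < ∫ z, ‖mono n α z‖ ^ 2 ∂μ)
    (c : (Fin n → ℕ) → ℝ) (hc : ∀ α, c α = (∫ z, ‖mono n α z‖ ^ 2 ∂μ)⁻¹)
    (k l : Fin n) (α β : Fin n → ℕ) :
    (β + uvec n k ≠ α + uvec n l →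
      ∫ z, Sop n c α k z * (starRingEnd ℂ) (Sop n c β l z) ∂μ = 0) ∧
    (β + uvec n k = α + uvec n l →
      ∫ z, Sop n c α k z * (starRingEnd ℂ) (Sop n c β l z) ∂μ =
        ((1 / c α) * (c α / c (α + uvec n l)
          - (if α k = 0 then (0 : ℝ)
             else c (α - uvec n k) / c (α + uvec n l - uvec n k))) : ℝ)) :=
  stmt9_general n μ hL2 hL2' horth hpos c hc k l α β
end
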